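/- arXiv:2009.13811 — 2 statements merged into one kernel-verified Lean document; each statement's English description precedes it below -/
import Mathlib

section
/- Let u : ℝ × ℝ → ℝ be twice continuously differentiable and satisfy (1 + F·a/(1+b·u)²)·∂u/∂t + v·∂u/∂x = 0 with a, b, F, v > 0 and u ≥ 0. Then setting w = u + F·a·u/(1+b·u), one has ∂²w/∂t² = v²·u_xx/(1 + F·a/(1+b·u)²) + 2·v²·F·a·b·(1+b·u)·(u_x)²/((1+b·u)² + F·a)². -/
/-!
With `g p = p + F a p / (1 + b p)` one has `g' p = R p := 1 + F a / (1 + b p) ^ 2` (the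
retardation factor), so the equation says `w_t = R(u) u_t = -v u_x`. Hence
`w_tt = -v u_xt = -v u_tx` by symmetry of second derivatives, and differentiating
`u_t = -v u_x / R(u)` in `x`, with `R' p = -2 F a b / (1 + b p) ^ 3`, gives the formula.
-/

open Function

section PartialDerivatives

variable {E : Type*} [NormedAddCommGroup E] [NormedSpace ℝ E] {g : ℝ × ℝ → E} {x t : ℝ}

theorem DifferentiableAt.hasDerivAt_fst_partial (hg : DifferentiableAt ℝ g (x, t)) :
    HasDerivAt (fun y => g (y, t)) (fderiv ℝ g (x, t) (1, 0)) x := by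
  simpa [comp_def] using hg.hasFDerivAt.comp_hasDerivAt x
    ((hasDerivAt_id x).prodMk (hasDerivAt_const x t))

theorem DifferentiableAt.hasDerivAt_snd_partial (hg : DifferentiableAt ℝ g (x, t)) :
    HasDerivAt (fun s => g (x, s)) (fderiv ℝ g (x, t) (0, 1)) t := by
  simpa [comp_def] using hg.hasFDerivAt.comp_hasDerivAt t
    ((hasDerivAt_const t x).prodMk (hasDerivAt_id t))

end PartialDerivatives

section MixedPartials

variable {u : ℝ → ℝ → ℝ}

theorem hasDerivAt_deriv_fst_of_differentiable (hu : Differentiable ℝ (uncurry u)) (x t : ℝ) :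
    HasDerivAt (fun y => u y t) (deriv (fun y => u y t) x) x :=
  (hu (x, t)).hasDerivAt_fst_partial.differentiableAt.hasDerivAt

theorem hasDerivAt_deriv_snd_of_differentiable (hu : Differentiable ℝ (uncurry u)) (x t : ℝ) :
    HasDerivAt (fun s => u x s) (deriv (fun s => u x s) t) t :=
  (hu (x, t)).hasDerivAt_snd_partial.differentiableAt.hasDerivAt

theorem contDiff_uncurry_deriv_fst {n : WithTop ℕ∞} (hu : ContDiff ℝ (n + 1) (uncurry u)) :
    ContDiff ℝ n (uncurry fun x t => deriv (fun y => u y t) x) := by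
  have hdiff := hu.differentiable (by simp)
  have hfst : (uncurry fun x t => deriv (fun y => u y t) x)
      = fun p => fderiv ℝ (uncurry u) p (1, 0) := by
    funext ⟨x, t⟩
    exact (hdiff (x, t)).hasDerivAt_fst_partial.deriv
  rw [hfst]
  exact (hu.fderiv_right le_rfl).clm_apply contDiff_const

theorem deriv_snd_deriv_fst_comm (hu : ContDiff ℝ 2 (uncurry u)) (x t : ℝ) :
    deriv (fun s => deriv (fun y => u y s) x) t = deriv (fun y => deriv (fun s => u y s) t) x := by
  set f := uncurry u
  have hf : Differentiable ℝ f := hu.differentiable two_ne_zero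
  have hf' : Differentiable ℝ (fderiv ℝ f) :=
    (hu.fderiv_right (m := 1) (by norm_num)).differentiable one_ne_zero
  have hfst : (fun s => deriv (fun y => u y s) x) = fun s => fderiv ℝ f (x, s) (1, 0) := by
    funext s; exact (hf (x, s)).hasDerivAt_fst_partial.deriv
  have hsnd : (fun y => deriv (fun s => u y s) t) = fun y => fderiv ℝ f (y, t) (0, 1) := by
    funext y; exact (hf (y, t)).hasDerivAt_snd_partial.deriv
  have hfst_t := ((hf' (x, t)).hasDerivAt_snd_partial.clm_apply (hasDerivAt_const t (1, 0))).deriv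
  have hsnd_x := ((hf' (x, t)).hasDerivAt_fst_partial.clm_apply (hasDerivAt_const x (0, 1))).deriv
  simp only [map_zero, add_zero] at hfst_t hsnd_x
  rw [hfst, hsnd, hfst_t, hsnd_x]
  exact second_derivative_symmetric (fun p => (hf p).hasFDerivAt) (hf' (x, t)).hasFDerivAt _ _

end MixedPartials

theorem hasDerivAt_add_langmuir {φ : ℝ → ℝ} {φ' s : ℝ} (k b : ℝ) (hφ : HasDerivAt φ φ' s)
    (hden : 1 + b * φ s ≠ 0) :
    HasDerivAt (fun r => φ r + k * φ r / (1 + b * φ r)) ((1 + k / (1 + b * φ s) ^ 2) * φ') s := by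
  have hq := (hφ.const_mul k).fun_div ((hφ.const_mul b).const_add 1) hden
  refine (hφ.fun_add hq).congr_deriv ?_
  field_simp
  ring

theorem hasDerivAt_retardation {φ : ℝ → ℝ} {φ' s : ℝ} (k b : ℝ) (hφ : HasDerivAt φ φ' s)
    (hden : 1 + b * φ s ≠ 0) :
    HasDerivAt (fun r => 1 + k / (1 + b * φ r) ^ 2) (-2 * k * b * φ' / (1 + b * φ s) ^ 3) s := by
  have hq := (hasDerivAt_const s k).fun_div (((hφ.const_mul b).const_add 1).fun_pow 2)
    (pow_ne_zero 2 hden)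
  refine (hq.const_add 1).congr_deriv ?_
  field_simp
  ring

theorem stmt3_general (a b F v : ℝ) (ha : 0 < a) (hb : 0 < b) (hF : 0 < F)
    (u : ℝ → ℝ → ℝ) (hu : ContDiff ℝ 2 (Function.uncurry u))
    (hpos : ∀ x t, 0 ≤ u x t)
    (hpde : ∀ x t, (1 + F * a / (1 + b * u x t) ^ 2) * deriv (fun s => u x s) t
        + v * deriv (fun y => u y t) x = 0) :
    ∀ x t,
      deriv (fun s => deriv (fun r => u x r + F * a * u x r / (1 + b * u x r)) s) t
        = v ^ 2 * deriv (fun y => deriv (fun y' => u y' t) y) x / (1 + F * a / (1 + b * u x t) ^ 2)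
          + 2 * v ^ 2 * F * a * b * (1 + b * u x t) * (deriv (fun y => u y t) x) ^ 2 /
            ((1 + b * u x t) ^ 2 + F * a) ^ 2 := by
  intro x t
  have hden (y s : ℝ) : 0 < 1 + b * u y s := by have := hpos y s; positivity
  have hR (y s : ℝ) : 0 < 1 + F * a / (1 + b * u y s) ^ 2 := by have := hden y s; positivity
  have hu₁ : Differentiable ℝ (uncurry u) := hu.differentiable two_ne_zero
  have hux₁ : Differentiable ℝ (uncurry fun x t => deriv (fun y => u y t) x) :=
    (contDiff_uncurry_deriv_fst (n := 1) hu).differentiable one_ne_zero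
  have hwt : (fun s => deriv (fun r => u x r + F * a * u x r / (1 + b * u x r)) s)
      = fun s => -v * deriv (fun y => u y s) x := by
    funext s
    rw [(hasDerivAt_add_langmuir (F * a) b (hasDerivAt_deriv_snd_of_differentiable hu₁ x s)
      (hden x s).ne').deriv]
    linear_combination hpde x s
  have hut : (fun y => deriv (fun s => u y s) t)
      = fun y => -v * deriv (fun y' => u y' t) y / (1 + F * a / (1 + b * u y t) ^ 2) := by
    funext y
    rw [eq_div_iff (hR y t).ne']
    linear_combination hpde y t
  have hquot := ((hasDerivAt_deriv_fst_of_differentiable hux₁ x t).const_mul (-v)).fun_div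
    (hasDerivAt_retardation (F * a) b (hasDerivAt_deriv_fst_of_differentiable hu₁ x t)
      (hden x t).ne') (hR x t).ne'
  rw [hwt, deriv_const_mul_field, deriv_snd_deriv_fst_comm hu, hut, hquot.deriv]
  have := hden x t
  field_simp
  ring

theorem stmt3 (a b F v : ℝ) (ha : 0 < a) (hb : 0 < b) (hF : 0 < F) (hv : 0 < v)
    (u : ℝ → ℝ → ℝ) (hu : ContDiff ℝ 2 (Function.uncurry u))
    (hpos : ∀ x t, 0 ≤ u x t)
    (hpde : ∀ x t, (1 + F * a / (1 + b * u x t) ^ 2) * deriv (fun s => u x s) t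
        + v * deriv (fun y => u y t) x = 0) :
    ∀ x t,
      deriv (fun s => deriv (fun r => u x r + F * a * u x r / (1 + b * u x r)) s) t
        = v ^ 2 * deriv (fun y => deriv (fun y' => u y' t) y) x / (1 + F * a / (1 + b * u x t) ^ 2)
          + 2 * v ^ 2 * F * a * b * (1 + b * u x t) * (deriv (fun y => u y t) x) ^ 2 /
            ((1 + b * u x t) ^ 2 + F * a) ^ 2 :=
  stmt3_general a b F v ha hb hF u hu hpos hpde
end

section
/- Let A = (∂q_i/∂u_j) be the Jacobian of the two-component Langmuir isotherm q_i(u₁,u₂) = a_i u_i/(1+b₁u₁+b₂u₂) at a point with u₁, u₂ ≥ 0 and a_i, b_i > 0. Then both eigenvalues of A are real and positive. -/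
/-! The Jacobian of the Langmuir isotherm has positive trace and determinant
`a₁ a₂ / (1 + b₁ u₁ + b₂ u₂) ^ 3`, and its off-diagonal entries have the same sign. For any real
`2 × 2` matrix, `tr² - 4 det = (A₀₀ - A₁₁)² + 4 A₀₁ A₁₀`, so the sign condition makes the
discriminant of the characteristic polynomial nonnegative; its two real roots then have positive
sum and product, hence are both positive. -/

open Polynomial

theorem exists_pos_roots_quadratic_of_discrim_nonneg {t d : ℝ} (ht : 0 < t) (hd : 0 < d)
    (hdisc : 4 * d ≤ t ^ 2) :
    ∃ μ₁ μ₂ : ℝ, 0 < μ₁ ∧ 0 < μ₂ ∧ X ^ 2 - C t * X + C d = (X - C μ₁) * (X - C μ₂) := by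
  set s := √(t ^ 2 - 4 * d)
  have hs_sq : s ^ 2 = t ^ 2 - 4 * d := Real.sq_sqrt (by linarith)
  have hs_lt : s < t := (Real.sqrt_lt' ht).2 (by linarith)
  refine ⟨(t + s) / 2, (t - s) / 2, by positivity, by linarith, ?_⟩
  have hsum : (t + s) / 2 + (t - s) / 2 = t := by ring
  have hprod : (t + s) / 2 * ((t - s) / 2) = d := by linear_combination -hs_sq / 4
  calc X ^ 2 - C t * X + C d
      = X ^ 2 - C ((t + s) / 2 + (t - s) / 2) * X + C ((t + s) / 2 * ((t - s) / 2)) := by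
        rw [hsum, hprod]
    _ = (X - C ((t + s) / 2)) * (X - C ((t - s) / 2)) := by
        simp only [map_add, map_mul]; ring

theorem Matrix.trace_sq_sub_four_mul_det_fin_two {R : Type*} [CommRing R]
    (A : Matrix (Fin 2) (Fin 2) R) :
    A.trace ^ 2 - 4 * A.det = (A 0 0 - A 1 1) ^ 2 + 4 * (A 0 1 * A 1 0) := by
  rw [Matrix.trace_fin_two, Matrix.det_fin_two]; ring

theorem Matrix.exists_pos_roots_charpoly_fin_two (A : Matrix (Fin 2) (Fin 2) ℝ)
    (htr : 0 < A.trace) (hdet : 0 < A.det) (hoff : 0 ≤ A 0 1 * A 1 0) :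
    ∃ μ₁ μ₂ : ℝ, 0 < μ₁ ∧ 0 < μ₂ ∧ A.charpoly = (X - C μ₁) * (X - C μ₂) := by
  rw [A.charpoly_fin_two]
  refine exists_pos_roots_quadratic_of_discrim_nonneg htr hdet ?_
  nlinarith [A.trace_sq_sub_four_mul_det_fin_two, sq_nonneg (A 0 0 - A 1 1)]

theorem hasDerivAt_affine_div_affine {𝕜 : Type*} [NontriviallyNormedField 𝕜] (α β γ δ u : 𝕜)
    (hu : γ * u + δ ≠ 0) :
    HasDerivAt (fun s => (α * s + β) / (γ * s + δ)) ((α * δ - β * γ) / (γ * u + δ) ^ 2) u :=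
  ((((hasDerivAt_id' u).const_mul α).add_const β).fun_div
    (((hasDerivAt_id' u).const_mul γ).add_const δ) hu).congr_deriv (by ring)

theorem deriv_eq_of_eq_affine_div_affine {𝕜 : Type*} [NontriviallyNormedField 𝕜] {f : 𝕜 → 𝕜}
    {α β γ δ u : 𝕜} (hf : ∀ s, f s = (α * s + β) / (γ * s + δ)) (hu : γ * u + δ ≠ 0) :
    deriv f u = (α * δ - β * γ) / (γ * u + δ) ^ 2 := by
  rw [funext hf]
  exact (hasDerivAt_affine_div_affine α β γ δ u hu).deriv

section Langmuir

variable (a₁ a₂ b₁ b₂ u₁ u₂ : ℝ)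

/-- `(∂qᵢ/∂uⱼ)` for the Langmuir isotherm `qᵢ = aᵢ uᵢ / (1 + b₁ u₁ + b₂ u₂)`. -/
noncomputable def langmuirJacobian : Matrix (Fin 2) (Fin 2) ℝ :=
  !![a₁ * (1 + b₂ * u₂) / (1 + b₁ * u₁ + b₂ * u₂) ^ 2,
     -(a₁ * b₂ * u₁) / (1 + b₁ * u₁ + b₂ * u₂) ^ 2;
     -(a₂ * b₁ * u₂) / (1 + b₁ * u₁ + b₂ * u₂) ^ 2,
     a₂ * (1 + b₁ * u₁) / (1 + b₁ * u₁ + b₂ * u₂) ^ 2]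

theorem langmuirJacobian_eq_deriv (hD : 1 + b₁ * u₁ + b₂ * u₂ ≠ 0) :
    !![deriv (fun s => a₁ * s / (1 + b₁ * s + b₂ * u₂)) u₁,
       deriv (fun s => a₁ * u₁ / (1 + b₁ * u₁ + b₂ * s)) u₂;
       deriv (fun s => a₂ * u₂ / (1 + b₁ * s + b₂ * u₂)) u₁,
       deriv (fun s => a₂ * s / (1 + b₁ * u₁ + b₂ * s)) u₂] = langmuirJacobian a₁ a₂ b₁ b₂ u₁ u₂ := by
  have hD₁ : b₁ * u₁ + (1 + b₂ * u₂) ≠ 0 := by convert hD using 1; ring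
  have hD₂ : b₂ * u₂ + (1 + b₁ * u₁) ≠ 0 := by convert hD using 1; ring
  rw [deriv_eq_of_eq_affine_div_affine (α := a₁) (β := 0) (fun s => by ring) hD₁,
    deriv_eq_of_eq_affine_div_affine (α := 0) (β := a₁ * u₁) (fun s => by ring) hD₂,
    deriv_eq_of_eq_affine_div_affine (α := 0) (β := a₂ * u₂) (fun s => by ring) hD₁,
    deriv_eq_of_eq_affine_div_affine (α := a₂) (β := 0) (fun s => by ring) hD₂, langmuirJacobian]
  ring_nf

variable {a₁ a₂ b₁ b₂ u₁ u₂}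

theorem trace_langmuirJacobian_pos (ha₁ : 0 < a₁) (ha₂ : 0 < a₂) (hb₁ : 0 ≤ b₁) (hb₂ : 0 ≤ b₂)
    (hu₁ : 0 ≤ u₁) (hu₂ : 0 ≤ u₂) : 0 < (langmuirJacobian a₁ a₂ b₁ b₂ u₁ u₂).trace := by
  rw [Matrix.trace_fin_two, langmuirJacobian]
  simp only [Matrix.of_apply, Matrix.cons_val', Matrix.cons_val_zero, Matrix.cons_val_one,
    Matrix.empty_val', Matrix.cons_val_fin_one]
  positivity

theorem det_langmuirJacobian (hD : 1 + b₁ * u₁ + b₂ * u₂ ≠ 0) :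
    (langmuirJacobian a₁ a₂ b₁ b₂ u₁ u₂).det = a₁ * a₂ / (1 + b₁ * u₁ + b₂ * u₂) ^ 3 := by
  rw [Matrix.det_fin_two, langmuirJacobian]
  simp only [Matrix.of_apply, Matrix.cons_val', Matrix.cons_val_zero, Matrix.cons_val_one,
    Matrix.empty_val', Matrix.cons_val_fin_one]
  field_simp
  ring

theorem langmuirJacobian_offDiag_mul_nonneg (ha₁ : 0 ≤ a₁) (ha₂ : 0 ≤ a₂) (hb₁ : 0 ≤ b₁)
    (hb₂ : 0 ≤ b₂) (hu₁ : 0 ≤ u₁) (hu₂ : 0 ≤ u₂) :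
    0 ≤ langmuirJacobian a₁ a₂ b₁ b₂ u₁ u₂ 0 1 * langmuirJacobian a₁ a₂ b₁ b₂ u₁ u₂ 1 0 := by
  simp only [langmuirJacobian, Matrix.of_apply, Matrix.cons_val', Matrix.cons_val_zero,
    Matrix.cons_val_one, Matrix.empty_val', Matrix.cons_val_fin_one, neg_div, neg_mul_neg]
  positivity

end Langmuir

theorem stmt13 (a₁ a₂ b₁ b₂ u₁ u₂ : ℝ) (ha₁ : 0 < a₁) (ha₂ : 0 < a₂)
    (hb₁ : 0 < b₁) (hb₂ : 0 < b₂) (hu₁ : 0 ≤ u₁) (hu₂ : 0 ≤ u₂) :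
    ∀ A : Matrix (Fin 2) (Fin 2) ℝ,
      A = !![deriv (fun s => a₁ * s / (1 + b₁ * s + b₂ * u₂)) u₁,
             deriv (fun s => a₁ * u₁ / (1 + b₁ * u₁ + b₂ * s)) u₂;
             deriv (fun s => a₂ * u₂ / (1 + b₁ * s + b₂ * u₂)) u₁,
             deriv (fun s => a₂ * s / (1 + b₁ * u₁ + b₂ * s)) u₂] →
      ∃ μ₁ μ₂ : ℝ, 0 < μ₁ ∧ 0 < μ₂ ∧
        A.charpoly = (Polynomial.X - Polynomial.C μ₁) * (Polynomial.X - Polynomial.C μ₂) := by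
  rintro A rfl
  have hD : 0 < 1 + b₁ * u₁ + b₂ * u₂ := by positivity
  rw [langmuirJacobian_eq_deriv _ _ _ _ _ _ hD.ne']
  refine Matrix.exists_pos_roots_charpoly_fin_two _
    (trace_langmuirJacobian_pos ha₁ ha₂ hb₁.le hb₂.le hu₁ hu₂) ?_
    (langmuirJacobian_offDiag_mul_nonneg ha₁.le ha₂.le hb₁.le hb₂.le hu₁ hu₂)
  rw [det_langmuirJacobian hD.ne']
  positivity
end
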